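/- arXiv:1910.02117 — 5 statements merged into one kernel-verified Lean document; each statement's English description precedes it below -/
import Mathlib

section
/- For integers n ≥ m ≥ 1, the Baumslag-Solitar groups BS(m,n) and BS(-m,n) are abstractly commensurable. -/
def AbstractlyCommensurable (G : Type*) (H : Type*) [Group G] [Group H] : Prop :=
  ∃ (A : Subgroup G) (B : Subgroup H), A.FiniteIndex ∧ B.FiniteIndex ∧ Nonempty (A ≃* B)

def BSRel (m n : ℤ) : Set (FreeGroup Bool) :=
  {(FreeGroup.of false)⁻¹ * FreeGroup.of true ^ m * FreeGroup.of false *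
    (FreeGroup.of true ^ n)⁻¹}

abbrev BS (m n : ℤ) : Type := PresentedGroup (BSRel m n)

namespace BSAux

abbrev C2 := Multiplicative (ZMod 2)

def c : C2 := Multiplicative.ofAdd 1

def a (k n : ℤ) : BS k n := PresentedGroup.of true
def t (k n : ℤ) : BS k n := PresentedGroup.of false

theorem bs_rel (k n : ℤ) :
    (t k n)⁻¹ * (a k n) ^ k * t k n = (a k n) ^ n := by
  have h : PresentedGroup.mk (BSRel k n)
      ((FreeGroup.of false)⁻¹ * FreeGroup.of true ^ k * FreeGroup.of false *
        (FreeGroup.of true ^ n)⁻¹) = 1 := by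
    apply (QuotientGroup.eq_one_iff _).2
    exact Subgroup.subset_normalClosure rfl
  rw [map_mul, map_mul, map_mul, map_inv, map_inv, map_zpow, map_zpow] at h
  exact mul_inv_eq_one.mp h

/-- action of a square-one automorphism as an action of `C2` -/
def involAct {H : Type*} [Group H] (σ : MulAut H) (hσ : σ * σ = 1) : C2 →* MulAut H where
  toFun x := σ ^ (x.toAdd.val)
  map_one' := by
    simp
  map_mul' x y := by
    have key : ∀ u v : ZMod 2, (u + v).val = u.val + v.val ∨
        (u + v).val + 2 = u.val + v.val := by decide
    have hσ2 : σ ^ 2 = 1 := by rw [pow_two]; exact hσ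
    show σ ^ (x.toAdd + y.toAdd).val = σ ^ x.toAdd.val * σ ^ y.toAdd.val
    rcases key x.toAdd y.toAdd with h | h
    · rw [h, pow_add]
    · rw [← pow_add, ← h, pow_add, hσ2, mul_one]

end BSAux
namespace BSAux

def negf (k n : ℤ) : Bool → BS k n := fun b => if b then (a k n)⁻¹ else t k n

theorem negf_rel (k n : ℤ) : ∀ r ∈ BSRel k n, FreeGroup.lift (negf k n) r = 1 := by
  intro r hr
  rw [Set.mem_singleton_iff.mp hr]
  rw [map_mul, map_mul, map_mul, map_inv, map_inv, map_zpow, map_zpow,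
    FreeGroup.lift_apply_of, FreeGroup.lift_apply_of]
  show (t k n)⁻¹ * ((a k n)⁻¹) ^ k * t k n * (((a k n)⁻¹) ^ n)⁻¹ = 1
  have h := bs_rel k n
  rw [inv_zpow, inv_zpow, ← zpow_neg, inv_inv]
  have h2 : (t k n)⁻¹ * (a k n) ^ (-k) * t k n = (a k n) ^ (-n) := by
    rw [zpow_neg, zpow_neg, ← h]
    group
  rw [h2, ← zpow_add]
  simp

def negHom (k n : ℤ) : BS k n →* BS k n := PresentedGroup.toGroup (negf_rel k n)

theorem negHom_negHom (k n : ℤ) (x : BS k n) : negHom k n (negHom k n x) = x := by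
  have : (negHom k n).comp (negHom k n) = MonoidHom.id (BS k n) := by
    apply PresentedGroup.ext
    intro b
    cases b <;> simp [negHom, negf, a, t]
  exact DFunLike.congr_fun this x

def negAut (k n : ℤ) : MulAut (BS k n) :=
  MonoidHom.toMulEquiv (negHom k n) (negHom k n)
    (MonoidHom.ext (negHom_negHom k n)) (MonoidHom.ext (negHom_negHom k n))

theorem negAut_sq (k n : ℤ) : negAut k n * negAut k n = 1 := by
  ext x
  exact negHom_negHom k n x

def act (k n : ℤ) : C2 →* MulAut (BS k n) := involAct (negAut k n) (negAut_sq k n)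

abbrev SP (k n : ℤ) := SemidirectProduct (BS k n) C2 (act k n)

theorem act_c (k n : ℤ) : act k n c = negAut k n := by
  show negAut k n ^ (1 : ZMod 2).val = negAut k n
  rw [show (1 : ZMod 2).val = 1 from rfl, pow_one]

theorem negAut_a (k n : ℤ) : negAut k n (a k n) = (a k n)⁻¹ := by
  show negHom k n (PresentedGroup.of true) = _
  simp [negHom, negf, a]

theorem negAut_t (k n : ℤ) : negAut k n (t k n) = t k n := by
  show negHom k n (PresentedGroup.of false) = _
  simp [negHom, negf, t]

end BSAux
namespace BSAux

open SemidirectProduct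

theorem c_mul_c : c * c = 1 := by decide
theorem c_inv : c⁻¹ = c := by decide

def crossf (k' n : ℤ) : Bool → SP k' n := fun b =>
  if b then inl (a k' n) else inl (t k' n) * inr c

theorem conj_c (k' n : ℤ) (x : BS k' n) :
    inr c * inl x * (inr c)⁻¹ = (inl (negAut k' n x) : SP k' n) := by
  rw [← act_c k' n]
  exact (inl_aut c x).symm

theorem crossf_rel (k k' n : ℤ) (hk : k' = -k) :
    ∀ r ∈ BSRel k n, FreeGroup.lift (crossf k' n) r = 1 := by
  intro r hr
  rw [Set.mem_singleton_iff.mp hr]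
  rw [map_mul, map_mul, map_mul, map_inv, map_inv, map_zpow, map_zpow,
    FreeGroup.lift_apply_of, FreeGroup.lift_apply_of]
  show (inl (t k' n) * inr c)⁻¹ * (inl (a k' n)) ^ k * (inl (t k' n) * inr c) *
      ((inl (a k' n) : SP k' n) ^ n)⁻¹ = 1
  rw [← map_zpow, ← map_zpow]
  rw [mul_inv_rev]
  have key : (inr c)⁻¹ * ((inl (t k' n))⁻¹ * inl ((a k' n) ^ k) * inl (t k' n)) * inr c
      = (inl ((a k' n) ^ n) : SP k' n) := by
    have inner : ((inl (t k' n) : SP k' n))⁻¹ * inl ((a k' n) ^ k) * inl (t k' n)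
        = inl ((t k' n)⁻¹ * (a k' n) ^ k * t k' n) := by
      rw [map_mul, map_mul, map_inv]
    rw [inner]
    have : (inr c)⁻¹ * inl ((t k' n)⁻¹ * (a k' n) ^ k * t k' n) * inr c
        = (inl (negAut k' n ((t k' n)⁻¹ * (a k' n) ^ k * t k' n)) : SP k' n) := by
      rw [← conj_c, ← map_inv, c_inv]
    rw [this]
    congr 1
    rw [map_mul, map_mul, map_inv, map_zpow, negAut_a, negAut_t, inv_zpow, ← zpow_neg, ← hk]
    exact bs_rel k' n
  calc (inr c)⁻¹ * (inl (t k' n))⁻¹ * inl ((a k' n) ^ k) * (inl (t k' n) * inr c) *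
        ((inl ((a k' n) ^ n) : SP k' n))⁻¹
      = ((inr c)⁻¹ * ((inl (t k' n))⁻¹ * inl ((a k' n) ^ k) * inl (t k' n)) * inr c) *
        ((inl ((a k' n) ^ n) : SP k' n))⁻¹ := by group
    _ = 1 := by rw [key, mul_inv_cancel]

def crossHom (k k' n : ℤ) (hk : k' = -k) : BS k n →* SP k' n :=
  PresentedGroup.toGroup (crossf_rel k k' n hk)

theorem crossHom_a (k k' n : ℤ) (hk : k' = -k) :
    crossHom k k' n hk (a k n) = inl (a k' n) := by
  simp [crossHom, a, crossf]

theorem crossHom_t (k k' n : ℤ) (hk : k' = -k) :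
    crossHom k k' n hk (t k n) = inl (t k' n) * inr c := by
  simp [crossHom, t, crossf]

end BSAux
namespace BSAux

open SemidirectProduct

theorem compat (k k' n : ℤ) (hk2 : k = -k') (g : C2) :
    (crossHom k' k n hk2).comp ((act k' n g).toMonoidHom)
      = (MulAut.conj ((inr g : SP k n))).toMonoidHom.comp (crossHom k' k n hk2) := by
  have hg : g = 1 ∨ g = c := by revert g; decide
  apply PresentedGroup.ext
  intro b
  show crossHom k' k n hk2 (act k' n g (PresentedGroup.of b))
      = inr g * crossHom k' k n hk2 (PresentedGroup.of b) * (inr g)⁻¹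
  rcases hg with rfl | rfl
  · simp
  · rw [act_c]
    cases b
    · show crossHom k' k n hk2 (negAut k' n (t k' n))
          = inr c * crossHom k' k n hk2 (t k' n) * (inr c)⁻¹
      rw [negAut_t, crossHom_t]
      have h3 : (inr c * (inl (t k n) * inr c) * (inr c)⁻¹ : SP k n)
          = (inr c * inl (t k n) * (inr c)⁻¹) * inr c := by group
      rw [h3, conj_c, negAut_t]
    · show crossHom k' k n hk2 (negAut k' n (a k' n))
          = inr c * crossHom k' k n hk2 (a k' n) * (inr c)⁻¹
      rw [negAut_a, map_inv, crossHom_a, conj_c, negAut_a, map_inv]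

def hatHom (k k' n : ℤ) (hk2 : k = -k') : SP k' n →* SP k n :=
  SemidirectProduct.lift (crossHom k' k n hk2) inr (compat k k' n hk2)

theorem hat_cross (k k' n : ℤ) (hk : k' = -k) (hk2 : k = -k') (x : BS k n) :
    hatHom k k' n hk2 (crossHom k k' n hk x) = inl x := by
  have key : (hatHom k k' n hk2).comp (crossHom k k' n hk) = (inl : BS k n →* SP k n) := by
    apply PresentedGroup.ext
    intro b
    cases b
    · show hatHom k k' n hk2 (crossHom k k' n hk (t k n)) = inl (t k n)
      rw [crossHom_t, map_mul]
      show hatHom k k' n hk2 (inl (t k' n)) * hatHom k k' n hk2 (inr c) = inl (t k n)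
      rw [hatHom, lift_inl, lift_inr, crossHom_t, mul_assoc, ← map_mul, c_mul_c,
        map_one, mul_one]
    · show hatHom k k' n hk2 (crossHom k k' n hk (a k n)) = inl (a k n)
      rw [crossHom_a, hatHom, lift_inl, crossHom_a]
  exact DFunLike.congr_fun key x

end BSAux
namespace BSAux

open SemidirectProduct

theorem eq_inl_of_right_eq_one {k n : ℤ} (x : SP k n) (hx : x.right = 1) :
    x = inl x.left := by
  conv_lhs => rw [← inl_left_mul_inr_right x]
  rw [hx, map_one, mul_one]

end BSAux

theorem BS_commensurable_neg (m n : ℤ) (h1 : 1 ≤ m) (h2 : m ≤ n) :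
    AbstractlyCommensurable (BS m n) (BS (-m) n) := by
  classical
  have hk2 : (m : ℤ) = -(-m) := by ring
  set φ := BSAux.crossHom m (-m) n rfl with hφ
  set ψ := BSAux.crossHom (-m) m n hk2 with hψ
  set K1 := (SemidirectProduct.rightHom.comp φ).ker with hK1
  set K2 := (SemidirectProduct.rightHom.comp ψ).ker with hK2
  have main1 : ∀ g ∈ K1, ψ ((φ g).left) = SemidirectProduct.inl g := by
    intro g hg
    have hr : (φ g).right = 1 := hg
    have h3 := BSAux.hat_cross m (-m) n rfl hk2 g
    rw [BSAux.eq_inl_of_right_eq_one (φ g) hr] at h3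
    rw [BSAux.hatHom, SemidirectProduct.lift_inl] at h3
    exact h3
  have main2 : ∀ x ∈ K2, φ ((ψ x).left) = SemidirectProduct.inl x := by
    intro x hx
    have hr : (ψ x).right = 1 := hx
    have h3 := BSAux.hat_cross (-m) m n hk2 rfl x
    rw [BSAux.eq_inl_of_right_eq_one (ψ x) hr] at h3
    rw [BSAux.hatHom, SemidirectProduct.lift_inl] at h3
    exact h3
  refine ⟨K1, K2, inferInstance, inferInstance, Nonempty.intro ?_⟩
  refine
    { toFun := fun g => ⟨(φ g.1).left, ?_⟩
      invFun := fun x => ⟨(ψ x.1).left, ?_⟩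
      left_inv := ?_
      right_inv := ?_
      map_mul' := ?_ }
  · show (ψ ((φ g.1).left)).right = 1
    rw [main1 g.1 g.2, SemidirectProduct.right_inl]
  · show (φ ((ψ x.1).left)).right = 1
    rw [main2 x.1 x.2, SemidirectProduct.right_inl]
  · intro g
    apply Subtype.ext
    show (ψ ((φ g.1).left)).left = g.1
    rw [main1 g.1 g.2, SemidirectProduct.left_inl]
  · intro x
    apply Subtype.ext
    show (φ ((ψ x.1).left)).left = x.1
    rw [main2 x.1 x.2, SemidirectProduct.left_inl]
  · intro g h
    apply Subtype.ext
    show (φ (g.1 * h.1)).left = (φ g.1).left * (φ h.1).left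
    rw [map_mul, SemidirectProduct.mul_left]
    have hr : (φ g.1).right = 1 := g.2
    rw [hr, map_one, MulAut.one_apply]
end

section
/- For every integer k > 1, the group BS(k,k) = ⟨a, t ∣ t⁻¹ aᵏ t = aᵏ⟩ contains a finite index subgroup isomorphic to F_k × Z, where F_k is the free group of rank k. Consequently, BS(k,k) and BS(l,l) are commensurable for all k, l > 1. -/
/-!
If `τ ∈ Aut N` fixes `x` and `τⁿ` is conjugation by `x`, then `x t⁻ⁿ` is central in
`N ⋊_τ ℤ = N ⋊ ⟨t⟩`, so `(v, q) ↦ v (x t⁻ⁿ)^q` embeds `N × ℤ` with index `n`.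

`BS(k,k)` is `F(x₀, …, x_{k-1}) ⋊_σ ℤ`, where `xᵢ = aⁱ t a⁻ⁱ` and `a` acts by the cyclic shift `σ`
of the `xᵢ`; since `σᵏ = 1`, it contains `F_k × ℤ` with index `k`.

For the free group `F(a, b_j : j ∈ J)`, let `τ` act on `F(X, Y_{j,s} : j ∈ J, s < n)` by
`X ↦ X`, `Y_{j,s} ↦ Y_{j,s+1}`, `Y_{j,n-1} ↦ X Y_{j,0} X⁻¹` (the deck transformation of the
`n`-fold cyclic cover of a rose). Then `τⁿ` is conjugation by `X` and
`F(X, Y) ⋊_τ ℤ ≅ F(a, b) × ℤ` via `X ↦ (aⁿ, 1)`, `Y_{j,s} ↦ (aˢ b_j a⁻ˢ, 0)`, `t ↦ (a, 0)`;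
hence `F_{1+m} × ℤ` contains `F_{1+mn} × ℤ` with finite index. With `m = k - 1`, `n = l - 1`
and symmetrically, `BS(k,k)` and `BS(l,l)` both contain `F_{1+(k-1)(l-1)} × ℤ` with finite index.
-/

open Multiplicative SemidirectProduct

def MonoidHom.IsFiniteIndexEmbedding {G H : Type*} [Group G] [Group H] (f : H →* G) : Prop :=
  Function.Injective f ∧ f.range.FiniteIndex

section FiniteIndexEmbedding

variable {G H P : Type*} [Group G] [Group H] [Group P]

lemma MulEquiv.isFiniteIndexEmbedding (e : H ≃* G) : (e : H →* G).IsFiniteIndexEmbedding := by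
  refine ⟨e.injective, ?_⟩
  rw [MonoidHom.range_eq_top_of_surjective _ e.surjective]
  infer_instance

lemma MonoidHom.IsFiniteIndexEmbedding.comp {f : H →* G} {g : P →* H}
    (hf : f.IsFiniteIndexEmbedding) (hg : g.IsFiniteIndexEmbedding) :
    (f.comp g).IsFiniteIndexEmbedding := by
  refine ⟨hf.1.comp hg.1, ⟨?_⟩⟩
  rw [MonoidHom.range_comp, g.range.index_map_of_injective hf.1]
  exact mul_ne_zero hg.2.index_ne_zero hf.2.index_ne_zero

lemma AbstractlyCommensurable.of_isFiniteIndexEmbedding {f : P →* G} {g : P →* H}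
    (hf : f.IsFiniteIndexEmbedding) (hg : g.IsFiniteIndexEmbedding) :
    AbstractlyCommensurable G H :=
  ⟨f.range, g.range, hf.2, hg.2,
    ⟨(MonoidHom.ofInjective hf.1).symm.trans (MonoidHom.ofInjective hg.1)⟩⟩

end FiniteIndexEmbedding

lemma MonoidHom.prod_ext {M N P : Type*} [MulOneClass M] [MulOneClass N] [MulOneClass P]
    {f g : M × N →* P} (hl : f.comp (MonoidHom.inl M N) = g.comp (MonoidHom.inl M N))
    (hr : f.comp (MonoidHom.inr M N) = g.comp (MonoidHom.inr M N)) : f = g := by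
  ext ⟨m, n⟩
  rw [← Prod.fst_mul_snd (m, n), map_mul, map_mul]
  exact congr_arg₂ (· * ·) (DFunLike.congr_fun hl m) (DFunLike.congr_fun hr n)

namespace MulAut

variable {N H : Type*} [Group N] [Group H] {τ : MulAut N}

lemma zpow_apply_eq_self_of_apply_eq_self {x : N} (hx : τ x = x) (m : ℤ) : (τ ^ m) x = x := by
  have := Equiv.Perm.zpow_apply_eq_self_of_apply_eq_self (f := MulAut.toPerm N τ) hx m
  rwa [← map_zpow] at this

lemma pow_apply_eq_self_of_apply_eq_self {x : N} (hx : τ x = x) (m : ℕ) : (τ ^ m) x = x := by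
  simpa using zpow_apply_eq_self_of_apply_eq_self hx m

lemma map_zpow_apply_eq_conj {f : N →* H} {a : H} (hf : ∀ v, f (τ v) = a * f v * a⁻¹)
    (m : ℤ) (v : N) : f ((τ ^ m) v) = a ^ m * f v * (a ^ m)⁻¹ := by
  induction m using Int.induction_on generalizing v with
  | zero => simp
  | succ m ih => rw [zpow_add_one, MulAut.mul_apply, ih, hf, zpow_add_one]; group
  | pred m ih =>
    have hinv : f (τ⁻¹ v) = a⁻¹ * f v * a :=
      calc f (τ⁻¹ v) = a⁻¹ * (a * f (τ⁻¹ v) * a⁻¹) * a := by group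
        _ = a⁻¹ * f v * a := by rw [← hf, MulAut.apply_inv_self]
    rw [zpow_sub_one, MulAut.mul_apply, ih, hinv, zpow_sub_one]; group

end MulAut

namespace SemidirectProduct

variable {N H : Type*} [Group N] [Group H] (τ : MulAut N)

def liftZPowers (f : N →* H) (a : H) (hf : ∀ v, f (τ v) = a * f v * a⁻¹) :
    N ⋊[zpowersHom (MulAut N) τ] Multiplicative ℤ →* H :=
  lift f (zpowersHom H a) fun g => by
    ext v
    simp [MulAut.map_zpow_apply_eq_conj hf, -map_zpow]

section liftZPowers

variable {f : N →* H} {a : H} {hf : ∀ v, f (τ v) = a * f v * a⁻¹}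

@[simp]
lemma liftZPowers_inl (v : N) : liftZPowers τ f a hf (inl v) = f v := lift_inl ..

@[simp]
lemma liftZPowers_inr (g : Multiplicative ℤ) :
    liftZPowers τ f a hf (inr g) = a ^ g.toAdd := lift_inr ..

end liftZPowers

lemma hom_ext_zpowers {F₁ F₂ : N ⋊[zpowersHom (MulAut N) τ] Multiplicative ℤ →* H}
    (hl : F₁.comp inl = F₂.comp inl) (hr : F₁ (inr (ofAdd 1)) = F₂ (inr (ofAdd 1))) : F₁ = F₂ :=
  hom_ext hl (MonoidHom.ext_mint hr)

lemma inr_pow_mul_inl_mul_inv (m : ℕ) (v : N) :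
    (inr (ofAdd 1) ^ m * inl v * (inr (ofAdd 1) ^ m)⁻¹ :
      N ⋊[zpowersHom (MulAut N) τ] Multiplicative ℤ) = inl ((τ ^ m) v) := by
  rw [← map_pow, ← map_inv, ← inl_aut]
  simp

variable {x : N} {n : ℕ}

lemma commute_inl_inr_of_apply_eq_self (hx : τ x = x) (g : Multiplicative ℤ) :
    Commute (inl x : N ⋊[zpowersHom (MulAut N) τ] Multiplicative ℤ) (inr g) := by
  have h := inl_aut (φ := zpowersHom (MulAut N) τ) g x
  rw [zpowersHom_apply, MulAut.zpow_apply_eq_self_of_apply_eq_self hx, map_inv] at h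
  exact eq_mul_inv_iff_mul_eq.1 h

def centralElem (τ : MulAut N) (x : N) (n : ℕ) : N ⋊[zpowersHom (MulAut N) τ] Multiplicative ℤ :=
  inl x * inr (ofAdd (-(n : ℤ)))

lemma commute_centralElem (hx : τ x = x) (hτ : τ ^ n = MulAut.conj x)
    (g : N ⋊[zpowersHom (MulAut N) τ] Multiplicative ℤ) : Commute (centralElem τ x n) g := by
  have hτ' : τ ^ (-(n : ℤ)) = MulAut.conj x⁻¹ := by rw [zpow_neg, zpow_natCast, hτ, map_inv]
  ext
  · simp [centralElem, hτ', MulAut.zpow_apply_eq_self_of_apply_eq_self hx, mul_assoc]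
  · simp [centralElem, add_comm]

lemma centralElem_zpow (hx : τ x = x) (m : ℤ) :
    centralElem τ x n ^ m = inl (x ^ m) * inr (ofAdd (-(n : ℤ)) ^ m) := by
  rw [centralElem, (commute_inl_inr_of_apply_eq_self τ hx _).mul_zpow, map_zpow, map_zpow]

def prodToSemidirect (hx : τ x = x) (hτ : τ ^ n = MulAut.conj x) :
    N × Multiplicative ℤ →* N ⋊[zpowersHom (MulAut N) τ] Multiplicative ℤ :=
  inl.noncommCoprod (zpowersHom _ (centralElem τ x n)) fun v q => by
    rw [zpowersHom_apply]
    exact ((commute_centralElem τ hx hτ (inl v)).zpow_left _).symm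

lemma prodToSemidirect_apply (hx : τ x = x) (hτ : τ ^ n = MulAut.conj x)
    (p : N × Multiplicative ℤ) : prodToSemidirect τ hx hτ p =
      ⟨p.1 * x ^ p.2.toAdd, ofAdd (-(n * p.2.toAdd))⟩ := by
  rw [prodToSemidirect, MonoidHom.noncommCoprod_apply, zpowersHom_apply, centralElem_zpow τ hx,
    mk_eq_inl_mul_inr, map_mul, mul_assoc, ← ofAdd_zsmul, smul_neg, smul_eq_mul, mul_comm]

lemma isFiniteIndexEmbedding_prodToSemidirect (hx : τ x = x) (hτ : τ ^ n = MulAut.conj x)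
    (hn : n ≠ 0) : (prodToSemidirect τ hx hτ).IsFiniteIndexEmbedding := by
  refine ⟨(injective_iff_map_eq_one _).2 fun ⟨v, q⟩ h => ?_, ?_⟩
  · rw [prodToSemidirect_apply, SemidirectProduct.ext_iff] at h
    have hq : q = 1 := by simpa [hn] using congrArg toAdd h.2
    simp_all
  · let K := (AddSubgroup.zmultiples (n : ℤ)).toSubgroup.comap
      (rightHom : N ⋊[zpowersHom (MulAut N) τ] Multiplicative ℤ →* _)
    have : K.FiniteIndex := by
      constructor
      simp [K, Subgroup.index_comap_of_surjective _ rightHom_surjective, Int.index_zmultiples, hn]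
    refine Subgroup.finiteIndex_of_le (H := K) fun g hg => ?_
    obtain ⟨m, hm⟩ := Int.mem_zmultiples_iff.1 hg
    refine ⟨(g.left * x ^ m, ofAdd (-m)), ?_⟩
    rw [prodToSemidirect_apply]
    ext <;> simp_all [mul_comm]

end SemidirectProduct

namespace FreeGroup

section Rotation

variable (k : ℕ) [NeZero k]

open Fin.NatCast

def rotateAut : MulAut (FreeGroup (Fin k)) := freeGroupCongr (Equiv.addRight 1)

lemma rotateAut_pow_of (j : ℕ) (i : Fin k) : (rotateAut k ^ j) (of i) = of (i + j) := by
  induction j with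
  | zero => simp
  | succ j ih =>
    rw [pow_succ', MulAut.mul_apply, ih]
    simp [rotateAut, add_assoc]

lemma rotateAut_pow_self : rotateAut k ^ k = 1 :=
  MulEquiv.toMonoidHom_injective <| ext_hom _ _ fun i => by simp [rotateAut_pow_of]

end Rotation

section Cover

variable (J : Type*) (n : ℕ)

def coverShiftFun : Option (J × Fin n) → FreeGroup (Option (J × Fin n))
  | none => of none
  | some (j, s) =>
    if h : s.1 + 1 < n then of (some (j, ⟨s + 1, h⟩))
    else of none * of (some (j, ⟨0, s.pos⟩)) * (of none)⁻¹

def coverUnshiftFun : Option (J × Fin n) → FreeGroup (Option (J × Fin n))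
  | none => of none
  | some (j, s) =>
    if h : 0 < s.1 then of (some (j, ⟨s - 1, by omega⟩))
    else (of none)⁻¹ * of (some (j, ⟨n - 1, by omega⟩)) * of none

def coverShift : MulAut (FreeGroup (Option (J × Fin n))) :=
  (lift (coverShiftFun J n)).toMulEquiv (lift (coverUnshiftFun J n))
    (ext_hom _ _ <| by
      rintro (_ | ⟨j, s⟩)
      · simp [coverShiftFun, coverUnshiftFun]
      · by_cases h : s.1 + 1 < n
        · simp [coverShiftFun, coverUnshiftFun, h]
        · have hs : (⟨n - 1, by omega⟩ : Fin n) = s := Fin.ext (by simp; omega)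
          simp [coverShiftFun, coverUnshiftFun, h, hs, mul_assoc])
    (ext_hom _ _ <| by
      rintro (_ | ⟨j, s⟩)
      · simp [coverShiftFun, coverUnshiftFun]
      · by_cases h : 0 < s.1
        · simp [coverShiftFun, coverUnshiftFun, h, Nat.sub_add_cancel h]
        · have hs : (⟨0, s.pos⟩ : Fin n) = s := Fin.ext (by simp; omega)
          simp [coverShiftFun, coverUnshiftFun, h, hs, Nat.sub_add_cancel s.pos, mul_assoc])

variable {J n}

@[simp]
lemma coverShift_of_none : coverShift J n (of none) = of none := by
  simp [coverShift, coverShiftFun]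

lemma coverShift_of_some (j : J) (s : Fin n) : coverShift J n (of (some (j, s))) =
    if h : s.1 + 1 < n then of (some (j, ⟨s + 1, h⟩))
    else of none * of (some (j, ⟨0, s.pos⟩)) * (of none)⁻¹ := by
  simp [coverShift, coverShiftFun]

lemma coverShift_pow_of_some_zero (j : J) (s : ℕ) (hs : s < n) :
    (coverShift J n ^ s) (of (some (j, ⟨0, by omega⟩))) = of (some (j, ⟨s, hs⟩)) := by
  induction s with
  | zero => rfl
  | succ s ih => rw [pow_succ', MulAut.mul_apply, ih (by omega), coverShift_of_some, dif_pos hs]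

lemma coverShift_pow_self : coverShift J n ^ n = MulAut.conj (of none) := by
  apply MulEquiv.toMonoidHom_injective
  refine ext_hom _ _ ?_
  rintro (_ | ⟨j, s⟩)
  · simp [MulAut.pow_apply_eq_self_of_apply_eq_self coverShift_of_none]
  · -- `τⁿ Y_{j,s} = τˢ (τ (τⁿ⁻¹ Y_{j,0})) = τˢ (X Y_{j,0} X⁻¹) = X Y_{j,s} X⁻¹`
    have hs := coverShift_pow_of_some_zero j s s.isLt
    have hsplit : coverShift J n ^ n = coverShift J n * coverShift J n ^ (n - 1) := by
      rw [← pow_succ', Nat.sub_add_cancel s.pos]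
    simp only [MulEquiv.coe_toMonoidHom, MulAut.conj_apply]
    rw [← hs, ← MulAut.mul_apply, ← pow_add, add_comm, pow_add, MulAut.mul_apply, hsplit,
      MulAut.mul_apply, coverShift_pow_of_some_zero j _ (Nat.sub_lt s.pos one_pos),
      coverShift_of_some, dif_neg (by dsimp only; omega)]
    simp [hs, MulAut.pow_apply_eq_self_of_apply_eq_self coverShift_of_none]

variable (J n)

def coverToProd : FreeGroup (Option (J × Fin n)) →* FreeGroup (Option J) × Multiplicative ℤ :=
  lift fun
    | none => (of none ^ n, ofAdd 1)
    | some (j, s) => (of none ^ (s : ℕ) * of (some j) * (of none ^ (s : ℕ))⁻¹, 1)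

lemma coverToProd_coverShift (v : FreeGroup (Option (J × Fin n))) :
    coverToProd J n (coverShift J n v) = (of none, 1) * coverToProd J n v * (of none, 1)⁻¹ := by
  have h : (coverToProd J n).comp (coverShift J n).toMonoidHom =
      (MulAut.conj (of none, 1)).toMonoidHom.comp (coverToProd J n) := by
    refine ext_hom _ _ ?_
    rintro (_ | ⟨j, s⟩)
    · ext <;> simp [coverToProd]; group
    · rw [MonoidHom.comp_apply, MulEquiv.coe_toMonoidHom, coverShift_of_some]
      split_ifs with h
      · ext <;> simp [coverToProd, pow_succ']; group
      · have hn : (of none : FreeGroup (Option J)) ^ n = of none * of none ^ (s : ℕ) := by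
          rw [← pow_succ']; congr 1; omega
        ext <;> simp [coverToProd, hn]; group
  exact DFunLike.congr_fun h v

def coverSemidirectToProd :
    FreeGroup (Option (J × Fin n)) ⋊[zpowersHom _ (coverShift J n)] Multiplicative ℤ →*
      FreeGroup (Option J) × Multiplicative ℤ :=
  liftZPowers _ (coverToProd J n) (of none, 1) (coverToProd_coverShift J n)

variable [NeZero n]

def prodToCoverSemidirect :
    FreeGroup (Option J) × Multiplicative ℤ →*
      FreeGroup (Option (J × Fin n)) ⋊[zpowersHom _ (coverShift J n)] Multiplicative ℤ :=
  (lift fun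
    | none => inr (ofAdd 1)
    | some j => inl (of (some (j, 0)))).noncommCoprod
    (zpowersHom _ (centralElem (coverShift J n) (of none) n)) fun _ q => by
      rw [zpowersHom_apply]
      exact ((commute_centralElem _ coverShift_of_none coverShift_pow_self _).zpow_left _).symm

lemma prodToCoverSemidirect_comp_coverSemidirectToProd :
    (prodToCoverSemidirect J n).comp (coverSemidirectToProd J n) = MonoidHom.id _ := by
  refine hom_ext_zpowers _ (ext_hom _ _ ?_) (by simp [coverSemidirectToProd, prodToCoverSemidirect])
  rintro (_ | ⟨j, s⟩)
  · have h := inr_pow_mul_inl_mul_inv (coverShift J n) n (of none)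
    rw [coverShift_pow_self, MulAut.conj_apply, mul_inv_cancel_right] at h
    have hpow : inr (ofAdd (n : ℤ)) = (inr (ofAdd 1) ^ n :
        FreeGroup (Option (J × Fin n)) ⋊[zpowersHom _ (coverShift J n)] Multiplicative ℤ) := by
      rw [← map_pow, ← ofAdd_nsmul, nsmul_one]
    simp [coverSemidirectToProd, prodToCoverSemidirect, coverToProd, centralElem, hpow,
      ← mul_assoc, h]
  · have h0 : (0 : Fin n) = ⟨0, s.pos⟩ := Fin.zero_eq_mk.mpr rfl
    simp [coverSemidirectToProd, prodToCoverSemidirect, coverToProd, inr_pow_mul_inl_mul_inv]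
    rw [h0, coverShift_pow_of_some_zero]

lemma coverSemidirectToProd_comp_prodToCoverSemidirect :
    (coverSemidirectToProd J n).comp (prodToCoverSemidirect J n) = MonoidHom.id _ := by
  refine MonoidHom.prod_ext (ext_hom _ _ ?_) (MonoidHom.ext_mint ?_)
  · rintro (_ | j) <;> simp [coverSemidirectToProd, prodToCoverSemidirect, coverToProd]
  · simp [coverSemidirectToProd, prodToCoverSemidirect, coverToProd, centralElem]

def coverSemidirectEquiv :
    FreeGroup (Option (J × Fin n)) ⋊[zpowersHom _ (coverShift J n)] Multiplicative ℤ ≃*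
      FreeGroup (Option J) × Multiplicative ℤ :=
  (coverSemidirectToProd J n).toMulEquiv (prodToCoverSemidirect J n)
    (prodToCoverSemidirect_comp_coverSemidirectToProd J n)
    (coverSemidirectToProd_comp_prodToCoverSemidirect J n)

lemma exists_isFiniteIndexEmbedding_prod :
    ∃ f : FreeGroup (Option (J × Fin n)) × Multiplicative ℤ →*
      FreeGroup (Option J) × Multiplicative ℤ, f.IsFiniteIndexEmbedding :=
  ⟨(coverSemidirectEquiv J n).toMonoidHom.comp
      (prodToSemidirect _ coverShift_of_none coverShift_pow_self),
    (coverSemidirectEquiv J n).isFiniteIndexEmbedding.comp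
      (isFiniteIndexEmbedding_prodToSemidirect _ _ _ (NeZero.ne n))⟩

end Cover

end FreeGroup

namespace BS

variable {m n : ℤ} {G : Type*} [Group G]

def a : BS m n := PresentedGroup.of true

def t : BS m n := PresentedGroup.of false

lemma t_inv_mul_a_zpow_mul_t : (t⁻¹ * a ^ m * t : BS m n) = a ^ n := by
  rw [← mul_inv_eq_one]
  exact PresentedGroup.one_of_mem rfl

def lift (x y : G) (h : y⁻¹ * x ^ m * y = x ^ n) : BS m n →* G :=
  PresentedGroup.toGroup (f := fun b => bif b then x else y) <| by
    rintro _ rfl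
    simp [h]

@[simp]
lemma lift_a (x y : G) (h : y⁻¹ * x ^ m * y = x ^ n) : lift x y h a = x :=
  PresentedGroup.toGroup.of _

@[simp]
lemma lift_t (x y : G) (h : y⁻¹ * x ^ m * y = x ^ n) : lift x y h t = y :=
  PresentedGroup.toGroup.of _

lemma hom_ext {f g : BS m n →* G} (ha : f a = g a) (ht : f t = g t) : f = g :=
  PresentedGroup.ext fun b => by cases b <;> assumption

variable (k : ℕ)

lemma commute_a_pow_t : Commute (a ^ k : BS k k) t := by
  have h := t_inv_mul_a_zpow_mul_t (m := k) (n := k)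
  rwa [zpow_natCast, mul_assoc, inv_mul_eq_iff_eq_mul] at h

lemma a_pow_mod_conj_t (j : ℕ) :
    (a ^ (j % k) * t * (a ^ (j % k))⁻¹ : BS k k) = a ^ j * t * (a ^ j)⁻¹ := by
  have hc : (a : BS k k) ^ (k * (j / k)) * t * (a ^ (k * (j / k)))⁻¹ = t := by
    rw [pow_mul, ((commute_a_pow_t k).pow_left _).eq, mul_inv_cancel_right]
  conv_rhs => rw [← Nat.mod_add_div j k, pow_add]
  calc _ = a ^ (j % k) * (a ^ (k * (j / k)) * t * (a ^ (k * (j / k)))⁻¹) * (a ^ (j % k))⁻¹ := by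
        rw [hc]
    _ = _ := by group

def conjT (i : Fin k) : BS k k := a ^ (i : ℕ) * t * (a ^ (i : ℕ))⁻¹

variable [NeZero k]

open FreeGroup

lemma commute_inr_pow_inl (v : FreeGroup (Fin k)) :
    Commute (inr (ofAdd 1) ^ k :
      FreeGroup (Fin k) ⋊[zpowersHom _ (rotateAut k)] Multiplicative ℤ) (inl v) := by
  have h := inr_pow_mul_inl_mul_inv (rotateAut k) k v
  rwa [rotateAut_pow_self, MulAut.one_apply, mul_inv_eq_iff_eq_mul] at h

def toSemidirect : BS k k →* FreeGroup (Fin k) ⋊[zpowersHom _ (rotateAut k)] Multiplicative ℤ :=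
  BS.lift (inr (ofAdd 1)) (inl (of 0)) <| by
    rw [zpow_natCast, mul_assoc, (commute_inr_pow_inl k _).eq, inv_mul_cancel_left]

lemma lift_conjT_rotateAut (v : FreeGroup (Fin k)) :
    FreeGroup.lift (conjT k) (rotateAut k v) = a * FreeGroup.lift (conjT k) v * a⁻¹ := by
  have h : (FreeGroup.lift (conjT k)).comp (rotateAut k).toMonoidHom =
      (MulAut.conj a).toMonoidHom.comp (FreeGroup.lift (conjT k)) := by
    refine ext_hom _ _ fun i => ?_
    have hi : ((i + 1 : Fin k) : ℕ) = (i + 1) % k := by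
      rw [Fin.val_add, Fin.val_one', Nat.add_mod_mod]
    simp only [MonoidHom.comp_apply, MulEquiv.coe_toMonoidHom, rotateAut, freeGroupCongr_apply,
      map.of, Equiv.coe_addRight, lift_apply_of, MulAut.conj_apply, conjT, hi, a_pow_mod_conj_t]
    group
  exact DFunLike.congr_fun h v

def ofSemidirect : FreeGroup (Fin k) ⋊[zpowersHom _ (rotateAut k)] Multiplicative ℤ →* BS k k :=
  liftZPowers (rotateAut k) (FreeGroup.lift (conjT k)) a (lift_conjT_rotateAut k)

def equivSemidirect :
    BS k k ≃* FreeGroup (Fin k) ⋊[zpowersHom _ (rotateAut k)] Multiplicative ℤ :=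
  (toSemidirect k).toMulEquiv (ofSemidirect k)
    (BS.hom_ext (by simp [toSemidirect, ofSemidirect])
      (by simp [toSemidirect, ofSemidirect, conjT]))
    (hom_ext_zpowers _ (ext_hom _ _ fun i => by
      simp [toSemidirect, ofSemidirect, conjT, inr_pow_mul_inl_mul_inv, rotateAut_pow_of])
      (by simp [toSemidirect, ofSemidirect]))

lemma exists_isFiniteIndexEmbedding :
    ∃ f : FreeGroup (Fin k) × Multiplicative ℤ →* BS k k, f.IsFiniteIndexEmbedding :=
  ⟨(equivSemidirect k).symm.toMonoidHom.comp
      (prodToSemidirect (rotateAut k) (map_one _) (by rw [rotateAut_pow_self, _root_.map_one])),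
    (equivSemidirect k).symm.isFiniteIndexEmbedding.comp
      (isFiniteIndexEmbedding_prodToSemidirect _ _ _ (NeZero.ne k))⟩

lemma exists_isFiniteIndexEmbedding_of_cover (l : ℕ) [NeZero l] :
    ∃ f : FreeGroup (Option (Fin (k - 1) × Fin l)) × Multiplicative ℤ →* BS k k,
      f.IsFiniteIndexEmbedding := by
  obtain ⟨f, hf⟩ := exists_isFiniteIndexEmbedding k
  obtain ⟨g, hg⟩ := exists_isFiniteIndexEmbedding_prod (Fin (k - 1)) l
  let e : FreeGroup (Fin k) × Multiplicative ℤ ≃*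
      FreeGroup (Option (Fin (k - 1))) × Multiplicative ℤ :=
    .prodCongr (freeGroupCongr ((finCongr (Nat.succ_pred_eq_of_ne_zero (NeZero.ne k)).symm).trans
      (finSuccEquiv (k - 1)))) (.refl _)
  exact ⟨f.comp (e.symm.toMonoidHom.comp g), hf.comp (e.symm.isFiniteIndexEmbedding.comp hg)⟩

end BS

theorem BS_kk_commensurable (k : ℕ) (hk : 1 < k) :
    (∃ H : Subgroup (BS (k : ℤ) (k : ℤ)), H.FiniteIndex ∧
      Nonempty (H ≃* (FreeGroup (Fin k) × Multiplicative ℤ))) ∧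
    (∀ l : ℕ, 1 < l →
      AbstractlyCommensurable (BS (k : ℤ) (k : ℤ)) (BS (l : ℤ) (l : ℤ))) := by
  have : NeZero k := ⟨by omega⟩
  refine ⟨?_, fun l hl => ?_⟩
  · obtain ⟨f, hf⟩ := BS.exists_isFiniteIndexEmbedding k
    exact ⟨f.range, hf.2, ⟨(MonoidHom.ofInjective hf.1).symm⟩⟩
  · have : NeZero l := ⟨by omega⟩
    have : NeZero (k - 1) := ⟨by omega⟩
    have : NeZero (l - 1) := ⟨by omega⟩
    obtain ⟨f, hf⟩ := BS.exists_isFiniteIndexEmbedding_of_cover k (l - 1)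
    obtain ⟨g, hg⟩ := BS.exists_isFiniteIndexEmbedding_of_cover l (k - 1)
    let e : FreeGroup (Option (Fin (k - 1) × Fin (l - 1))) × Multiplicative ℤ ≃*
        FreeGroup (Option (Fin (l - 1) × Fin (k - 1))) × Multiplicative ℤ :=
      .prodCongr (FreeGroup.freeGroupCongr (Equiv.optionCongr (Equiv.prodComm _ _))) (.refl _)
    exact .of_isFiniteIndexEmbedding hf (hg.comp e.isFiniteIndexEmbedding)
end

section
/- Let a ≥ 1 and b, c ≥ 0 be integers and let d = gcd(a, |b − c|). The following modified Euclidean procedure terminates and produces the pair (d, ρ) where ρ ≡ b ≡ c (mod d) and 0 ≤ ρ ≤ d−1: starting from (a₀, b₀, c₀) = (a, b, c), at each step replace b_i, c_i by their residues b_{i+1}, c_{i+1} modulo a_i; if b_{i+1} = c_{i+1}, stop with output (a_i, b_{i+1}); otherwise replace a_i by a_{i+1} = the unique number in [1, |b_{i+1} − c_{i+1}|] + min(b_{i+1}, c_{i+1}) congruent to a_i modulo |b_{i+1} − c_{i+1}|, and repeat. At termination, a_N = gcd(a, |b−c|) and b_N = c_N ≡ b (mod gcd(a, |b−c|)). -/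
/-- One step of the modified Euclidean procedure on a state `(a, b, c)`:
reduce `b` and `c` modulo `a`; if the residues agree, stop (fixed point);
otherwise replace `a` by the unique number in
`[min + 1, min + |b' − c'|]` congruent to `a` modulo `|b' − c'|`,
where `b', c'` are the residues and `min = min b' c'`. -/
def euclidStep : ℕ × ℕ × ℕ → ℕ × ℕ × ℕ := fun s =>
  let a := s.1
  let b := s.2.1 % a
  let c := s.2.2 % a
  if b = c then (a, b, c)
  else (min b c + ((a - min b c - 1) % (max b c - min b c) + 1), b, c)

/-!
The quantity `gcd a |b - c|` is invariant under a step: reducing `b` and `c` modulo `a` changes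
`b - c` by a multiple of `a`, and the new modulus is congruent to `a` modulo the new `|b - c|`.
As long as the residues differ, the new modulus lies in `[1, max b' c']`, so it is strictly smaller
than `a`, and strong induction on `a` applies. Once the residues agree, `a` divides `|b - c|`, so
`a` is the gcd itself.
-/

theorem Int.natAbs_natCast_sub_natCast (b c : ℕ) :
    ((b : ℤ) - c).natAbs = max b c - min b c := by
  omega

namespace Nat

theorem modEq_iff_dvd_max_sub_min {n b c : ℕ} : b ≡ c [MOD n] ↔ n ∣ max b c - min b c := by
  rw [modEq_iff_dvd, Int.natCast_dvd, Int.natAbs_natCast_sub_natCast, max_comm, min_comm]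

theorem gcd_max_sub_min_eq_intGcd (a b c : ℕ) :
    gcd a (max b c - min b c) = Int.gcd a ((b : ℤ) - c) := by
  rw [← Int.natAbs_natCast_sub_natCast]
  rfl

theorem gcd_max_sub_min_mod (a b c : ℕ) :
    gcd a (max (b % a) (c % a) - min (b % a) (c % a)) = gcd a (max b c - min b c) := by
  have hsub : ((b % a : ℕ) : ℤ) - (c % a : ℕ) = (b - c) - ((b / a : ℕ) - (c / a : ℕ)) * a := by
    push_cast [Int.emod_def]
    ring
  rw [gcd_max_sub_min_eq_intGcd, gcd_max_sub_min_eq_intGcd, hsub, Int.gcd_sub_mul_right_right]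

theorem add_sub_sub_one_mod_add_one_modEq {m a : ℕ} (n : ℕ) (h : m < a) :
    m + ((a - m - 1) % n + 1) ≡ a [MOD n] := by
  rw [show m + ((a - m - 1) % n + 1) = (a - m - 1) % n + (m + 1) by ring]
  calc (a - m - 1) % n + (m + 1) ≡ (a - m - 1) + (m + 1) [MOD n] := (mod_modEq _ _).add_right _
    _ = a := by omega

end Nat

section
variable {a b c : ℕ}

theorem euclidStep_of_mod_eq (h : b % a = c % a) : euclidStep (a, b, c) = (a, b % a, c % a) := by
  simp [euclidStep, h]

theorem euclidStep_of_mod_ne (ha : 0 < a) (h : b % a ≠ c % a) :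
    ∃ a₁, 0 < a₁ ∧ a₁ < a ∧ a₁ ≡ a [MOD max (b % a) (c % a) - min (b % a) (c % a)] ∧
      euclidStep (a, b, c) = (a₁, b % a, c % a) := by
  have hb := Nat.mod_lt b ha
  have hc := Nat.mod_lt c ha
  set m := min (b % a) (c % a)
  set M := max (b % a) (c % a)
  have hmM : m < M := by omega
  have hr := Nat.mod_lt (a - m - 1) (Nat.sub_pos_of_lt hmM)
  refine ⟨m + ((a - m - 1) % (M - m) + 1), by omega, by omega,
    Nat.add_sub_sub_one_mod_add_one_modEq _ (by omega), ?_⟩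
  simp only [euclidStep, if_neg h]
  rfl

theorem exists_iterate_euclidStep_eq (ha : 0 < a) :
    ∃ N, euclidStep^[N] (a, b, c) =
      (Nat.gcd a (max b c - min b c),
        b % Nat.gcd a (max b c - min b c), c % Nat.gcd a (max b c - min b c)) := by
  induction a using Nat.strong_induction_on generalizing b c with
  | _ a ih =>
  by_cases h : b % a = c % a
  · have hg : Nat.gcd a (max b c - min b c) = a := by
      rw [← Nat.gcd_max_sub_min_mod, h, max_self, min_self, Nat.sub_self, Nat.gcd_zero_right]
    exact ⟨1, by rw [hg, Function.iterate_one, euclidStep_of_mod_eq h]⟩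
  · obtain ⟨a₁, ha₁, ha₁a, hmod, hstep⟩ := euclidStep_of_mod_ne ha h
    obtain ⟨N, hN⟩ := ih a₁ ha₁a ha₁ (b := b % a) (c := c % a)
    have hg : Nat.gcd a₁ (max (b % a) (c % a) - min (b % a) (c % a)) =
        Nat.gcd a (max b c - min b c) := by
      rw [hmod.gcd_eq, Nat.gcd_max_sub_min_mod]
    have hdvd : Nat.gcd a (max b c - min b c) ∣ a := Nat.gcd_dvd_left _ _
    refine ⟨N + 1, ?_⟩
    rw [Function.iterate_succ_apply, hstep, hN, hg, Nat.mod_mod_of_dvd _ hdvd,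
      Nat.mod_mod_of_dvd _ hdvd]

end

theorem euclid_procedure_terminates (a b c : ℕ) (ha : 1 ≤ a) :
    ∃ (N : ℕ) (a' b' c' : ℕ), (euclidStep^[N]) (a, b, c) = (a', b', c') ∧
      b' = c' ∧
      a' = Nat.gcd a (max b c - min b c) ∧
      b' = b % a' ∧ c' = c % a' ∧ b' ≤ a' - 1 := by
  obtain ⟨N, hN⟩ := exists_iterate_euclidStep_eq (b := b) (c := c) ha
  have hg : 0 < Nat.gcd a (max b c - min b c) := Nat.gcd_pos_of_pos_left _ ha
  refine ⟨N, _, _, _, hN, Nat.modEq_iff_dvd_max_sub_min.2 (Nat.gcd_dvd_right _ _), rfl, rfl, rfl, ?_⟩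
  have := Nat.mod_lt b hg
  omega
end

section
/- Let l₁, l₂, m₁, m₂ ≥ 1 with l₁ m₁ = l₂ m₂ = L and l₁ < l₂. Suppose v = (v₀, …, v_{L−1}) is a vector of nonnegative integers with v_j = 0 whenever l₁ ∤ j, and w = (w₀, …, w_{L−1}) with w_j = 0 whenever l₂ ∤ j. If v₀ ≠ 0 and v_{l₁} ≠ 0, then v is not a cyclic permutation of w. -/
theorem not_cyclic_permutation (l₁ l₂ m₁ m₂ L : ℕ)
    (hl₁ : 1 ≤ l₁) (hm₁ : 1 ≤ m₁) (hm₂ : 1 ≤ m₂)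
    (hL₁ : l₁ * m₁ = L) (hL₂ : l₂ * m₂ = L) (hlt : l₁ < l₂)
    (v w : ℕ → ℕ)
    (hv : ∀ j < L, ¬ l₁ ∣ j → v j = 0)
    (hw : ∀ j < L, ¬ l₂ ∣ j → w j = 0)
    (hv0 : v 0 ≠ 0) (hvl : v l₁ ≠ 0) :
    ¬ ∃ C : ℕ, ∀ i < L, w i = v ((i + C) % L) := by
  rintro ⟨C, hC⟩
  have hl₂L : l₂ ∣ L := ⟨m₂, hL₂.symm⟩
  have hl₂pos : 0 < l₂ := lt_of_le_of_lt (Nat.zero_le _) hlt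
  have hLpos : 0 < L := by
    calc 0 < l₂ := hl₂pos
    _ ≤ l₂ * m₂ := Nat.le_mul_of_pos_right _ hm₂
    _ = L := hL₂
  have hl₁L : l₁ < L := lt_of_lt_of_le hlt (hL₂ ▸ Nat.le_mul_of_pos_right _ hm₂)
  set D := C % L with hD
  have hDlt : D < L := Nat.mod_lt _ hLpos
  obtain ⟨k, hk⟩ : ∃ k, C = k * L + D := ⟨C / L, by rw [hD]; exact (Nat.div_add_mod' C L).symm⟩
  have key : ∀ a, ((a + (L - D)) % L + C) % L = a % L := by
    intro a
    rw [Nat.mod_add_mod]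
    have h : a + (L - D) + C = a + L + k * L := by omega
    rw [h, Nat.add_mul_mod_self_right, Nat.add_mod_right]
  set i₀ := (L - D) % L with hi₀
  have hi₀lt : i₀ < L := Nat.mod_lt _ hLpos
  have h0 : (i₀ + C) % L = 0 := by
    have := key 0
    rwa [Nat.zero_add, Nat.zero_mod] at this
  have hdvd0 : l₂ ∣ i₀ := by
    by_contra h
    exact (by rw [hC i₀ hi₀lt, h0]; exact hv0 : w i₀ ≠ 0) (hw i₀ hi₀lt h)
  set i₁ := (l₁ + (L - D)) % L with hi₁
  have hi₁lt : i₁ < L := Nat.mod_lt _ hLpos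
  have h1 : (i₁ + C) % L = l₁ := by
    rw [key l₁, Nat.mod_eq_of_lt hl₁L]
  have hdvd1 : l₂ ∣ i₁ := by
    by_contra h
    exact (by rw [hC i₁ hi₁lt, h1]; exact hvl : w i₁ ≠ 0) (hw i₁ hi₁lt h)
  have heq : i₁ = (l₁ + i₀) % L := by
    rw [hi₁, hi₀, Nat.add_mod_mod]
  have hdvdl : l₂ ∣ l₁ := by
    rcases Nat.lt_or_ge (l₁ + i₀) L with hcase | hcase
    · have : i₁ = l₁ + i₀ := by rw [heq, Nat.mod_eq_of_lt hcase]
      have h2 : l₁ = i₁ - i₀ := by omega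
      rw [h2]; exact Nat.dvd_sub hdvd1 hdvd0
    · have : i₁ = l₁ + i₀ - L := by
        rw [heq, Nat.mod_eq_sub_mod hcase, Nat.mod_eq_of_lt (by omega)]
      have h2 : l₁ = (i₁ + L) - i₀ := by omega
      rw [h2]; exact Nat.dvd_sub (Nat.dvd_add hdvd1 hl₂L) hdvd0
  exact absurd (Nat.le_of_dvd hl₁ hdvdl) (not_le.mpr hlt)
end

section
/- Let r ≥ 2, n₁ = r^{l₁}, n₂ = r^{l₂}. Let G₁ = ⟨a, t₁,…,t_k ∣ t₁⁻¹ a t₁ = a^{n₁^{m₁}}, t_i⁻¹ a^{n₁^{p_{i−1}}} t_i = a^{n₁^{p_{i−1}}} (2 ≤ i ≤ k)⟩ and G₂ = ⟨b, s₁,…,s_k ∣ s₁⁻¹ b s₁ = b^{n₂^{m₂}}, s_i⁻¹ b^{n₂^{q_{i−1}}} s_i = b^{n₂^{q_{i−1}}} (2 ≤ i ≤ k)⟩ with 0 ≤ p_i ≤ m₁−1 and 0 ≤ q_i ≤ m₂−1. If l₁ m₁ = l₂ m₂ = S and there exist C ∈ Z and a permutation σ of {1,…,k−1} with l₂ q_{σ(i)}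 ≡ l₁ p_i + C (mod S) for all i, then G₁ ≅ G₂. -/
/-!
An ascending loop `t⁻¹ a t = a ^ R ^ S` gives
`t ^ c * a ^ R ^ F * t ^ (-c) = t ^ g * a ^ R ^ E * t ^ (-g)` whenever `E = F + S (g - c)`:
sliding a loop over the ascending loop shifts the exponent of its label by a multiple of `S`, so
only these exponents modulo `S` matter. Take `C₀ ≥ 0` with `C₀ ≡ C [ZMOD S]` and `gᵢ` with
`S gᵢ = l₂ q_{σ i} - l₁ pᵢ - C₀`. Then `a ↦ b ^ r ^ C₀`, `t₀ ↦ s₀`,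
`tᵢ ↦ s₀ ^ gᵢ s_{σ i} s₀ ^ (-gᵢ)` (an induction move, slides and a relabelling) respects the
relations, and a map of the same shape, with `b ↦ t₀ ^ C₀ a ^ r ^ x t₀ ^ (-C₀)` for
`x + C₀ = S C₀`, is its inverse.
-/

def GBSRels (k : ℕ) (A B : Fin k → ℤ) : Set (FreeGroup (Option (Fin k))) :=
  ⋃ i : Fin k,
    {(FreeGroup.of (some i))⁻¹ * FreeGroup.of none ^ (A i) * FreeGroup.of (some i) *
      (FreeGroup.of none ^ (B i))⁻¹}

abbrev GBSBouquet (k : ℕ) (A B : Fin k → ℤ) : Type := PresentedGroup (GBSRels k A B)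

namespace GBSBouquet

variable {k : ℕ} {A B : Fin k → ℤ}

def base : GBSBouquet k A B := PresentedGroup.of none

def stable (i : Fin k) : GBSBouquet k A B := PresentedGroup.of (some i)

theorem inv_stable_mul_base_zpow_mul_stable (i : Fin k) :
    (stable i)⁻¹ * base ^ A i * stable i = (base : GBSBouquet k A B) ^ B i := by
  have h := PresentedGroup.one_of_mem (rels := GBSRels k A B) (Set.mem_iUnion.2 ⟨i, rfl⟩)
  simp only [map_mul, map_inv, map_zpow, mul_inv_eq_one] at h
  exact h

variable {H : Type*} [Group H]

def lift (α : H) (τ : Fin k → H) (h : ∀ i, (τ i)⁻¹ * α ^ A i * τ i = α ^ B i) :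
    GBSBouquet k A B →* H :=
  PresentedGroup.toGroup (f := fun o => o.elim α τ) <| by
    simp only [GBSRels, Set.mem_iUnion, Set.mem_singleton_iff]
    rintro _ ⟨i, rfl⟩
    simpa [mul_inv_eq_one] using h i

variable {α : H} {τ : Fin k → H} {h : ∀ i, (τ i)⁻¹ * α ^ A i * τ i = α ^ B i}

@[simp]
theorem lift_base : lift α τ h base = α := PresentedGroup.toGroup.of _

@[simp]
theorem lift_stable (i : Fin k) : lift α τ h (stable i) = τ i := PresentedGroup.toGroup.of _

theorem hom_ext {φ ψ : GBSBouquet k A B →* H} (hbase : φ base = ψ base)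
    (hstable : ∀ i, φ (stable i) = ψ (stable i)) : φ = ψ :=
  PresentedGroup.ext fun
    | none => hbase
    | some i => hstable i

end GBSBouquet

section Conjugation

variable {G : Type*} [Group G] {a t : G}

theorem inv_mul_zpow_mul_of_inv_mul_mul {N : ℤ} (h : t⁻¹ * a * t = a ^ N) (x : ℤ) :
    t⁻¹ * a ^ x * t = a ^ (N * x) := by
  rw [zpow_mul, ← h]
  simpa using (conj_zpow (a := t⁻¹) (b := a) (i := x)).symm

theorem inv_pow_mul_zpow_mul_pow {N : ℤ} (h : t⁻¹ * a * t = a ^ N) (n : ℕ) (x : ℤ) :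
    (t ^ n)⁻¹ * a ^ x * t ^ n = a ^ (x * N ^ n) := by
  induction n with
  | zero => simp
  | succ n ih =>
    calc (t ^ (n + 1))⁻¹ * a ^ x * t ^ (n + 1) = t⁻¹ * ((t ^ n)⁻¹ * a ^ x * t ^ n) * t := by
          simp only [pow_succ, mul_inv_rev, mul_assoc]
      _ = a ^ (x * N ^ (n + 1)) := by
          rw [ih, inv_mul_zpow_mul_of_inv_mul_mul h, pow_succ]; ring_nf

variable {R : ℤ} {S : ℕ}

theorem conj_zpow_pow_eq_add_nat (h : t⁻¹ * a * t = a ^ R ^ S) (c : ℤ) (n F : ℕ) :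
    t ^ c * a ^ R ^ F * t ^ (-c) = t ^ (c + n) * a ^ R ^ (F + S * n) * t ^ (-(c + n)) := by
  rw [pow_add, pow_mul, ← inv_pow_mul_zpow_mul_pow h]
  group

theorem conj_zpow_pow_eq (h : t⁻¹ * a * t = a ^ R ^ S) {c g : ℤ} {E F : ℕ}
    (hEF : (E : ℤ) = F + S * (g - c)) :
    t ^ c * a ^ R ^ F * t ^ (-c) = t ^ g * a ^ R ^ E * t ^ (-g) := by
  wlog hcg : c ≤ g generalizing c g E F
  · exact (this (by linarith) (by linarith)).symm
  obtain ⟨n, hn⟩ := Int.eq_ofNat_of_zero_le (sub_nonneg.2 hcg)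
  obtain rfl : g = c + n := by omega
  obtain rfl : E = F + S * n := by
    rw [add_sub_cancel_left] at hEF; exact_mod_cast hEF
  exact conj_zpow_pow_eq_add_nat h c n F

end Conjugation

theorem commute_iff_inv_mul_mul_eq {G : Type*} [Group G] {t z : G} :
    Commute t z ↔ t⁻¹ * z * t = z := by
  rw [mul_assoc, inv_mul_eq_iff_eq_mul, eq_comm]
  rfl

structure IsAscendingBouquet {k : ℕ} [NeZero k] (R : ℤ) (S : ℕ) (e : Fin k → ℕ)
    (A B : Fin k → ℤ) : Prop where
  A_zero : A 0 = 1
  B_zero : B 0 = R ^ S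
  A_of_ne_zero : ∀ i, i ≠ 0 → A i = R ^ e i
  B_of_ne_zero : ∀ i, i ≠ 0 → B i = R ^ e i

namespace IsAscendingBouquet

open GBSBouquet

variable {k : ℕ} [NeZero k] {R : ℤ} {S : ℕ} {e e' : Fin k → ℕ} {A B A' B' : Fin k → ℤ}

theorem relations_iff (hAB : IsAscendingBouquet R S e A B) {H : Type*} [Group H] (α : H)
    (τ : Fin k → H) : (∀ i, (τ i)⁻¹ * α ^ A i * τ i = α ^ B i) ↔
      (τ 0)⁻¹ * α * τ 0 = α ^ R ^ S ∧ ∀ i, i ≠ 0 → Commute (τ i) (α ^ R ^ e i) := by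
  refine ⟨fun h => ⟨?_, fun i hi => ?_⟩, fun ⟨h0, h⟩ i => ?_⟩
  · simpa [hAB.A_zero, hAB.B_zero] using h 0
  · simpa [commute_iff_inv_mul_mul_eq, hAB.A_of_ne_zero i hi, hAB.B_of_ne_zero i hi] using h i
  · rcases eq_or_ne i 0 with rfl | hi
    · simpa [hAB.A_zero, hAB.B_zero] using h0
    · rw [hAB.A_of_ne_zero i hi, hAB.B_of_ne_zero i hi]
      exact commute_iff_inv_mul_mul_eq.1 (h i hi)

theorem inv_stable_zero_mul_base_mul_stable_zero (hAB : IsAscendingBouquet R S e A B) :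
    (stable 0)⁻¹ * base * stable 0 = (base : GBSBouquet k A B) ^ R ^ S :=
  ((hAB.relations_iff _ _).1 inv_stable_mul_base_zpow_mul_stable).1

theorem commute_stable (hAB : IsAscendingBouquet R S e A B) {i : Fin k} (hi : i ≠ 0) :
    Commute (stable i) ((base : GBSBouquet k A B) ^ R ^ e i) :=
  ((hAB.relations_iff _ _).1 inv_stable_mul_base_zpow_mul_stable).2 i hi

theorem twist_relations (hAB : IsAscendingBouquet R S e A B)
    (hAB' : IsAscendingBouquet R S e' A' B')
    {c : ℤ} {x : ℕ} {g : Fin k → ℤ} {σ : Equiv.Perm (Fin k)} (hσ : σ 0 = 0)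
    (he : ∀ i, i ≠ 0 → (e' (σ i) : ℤ) = x + e i + S * (g i - c)) (i : Fin k) :
    (stable 0 ^ g i * stable (σ i) * stable 0 ^ (-g i))⁻¹ *
        (stable 0 ^ c * base ^ R ^ x * stable 0 ^ (-c)) ^ A i *
        (stable 0 ^ g i * stable (σ i) * stable 0 ^ (-g i)) =
      (stable 0 ^ c * base ^ R ^ x * stable 0 ^ (-c) : GBSBouquet k A' B') ^ B i := by
  revert i
  rw [hAB.relations_iff]
  have hpow (m : ℕ) : (stable 0 ^ c * base ^ R ^ x * stable 0 ^ (-c) : GBSBouquet k A' B') ^ R ^ m =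
      stable 0 ^ c * base ^ R ^ (x + m) * stable 0 ^ (-c) := by
    rw [zpow_neg, conj_zpow, ← zpow_mul, ← pow_add]
  have ht := hAB'.inv_stable_zero_mul_base_mul_stable_zero
  refine ⟨?_, fun i hi => ?_⟩
  · rw [hσ, hpow,
      ← conj_zpow_pow_eq ht (c := c - 1) (g := c) (E := x + S) (F := x) (by push_cast; ring)]
    group
  · rw [hpow, conj_zpow_pow_eq ht (g := g i) (E := e' (σ i)) (by rw [he i hi]; push_cast; ring),
      zpow_neg]
    exact (hAB'.commute_stable (fun h => hi (σ.injective (h.trans hσ.symm)))).conj _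

def twist (hAB : IsAscendingBouquet R S e A B) (hAB' : IsAscendingBouquet R S e' A' B') (c : ℤ)
    (x : ℕ) (g : Fin k → ℤ) (σ : Equiv.Perm (Fin k)) (hσ : σ 0 = 0)
    (he : ∀ i, i ≠ 0 → (e' (σ i) : ℤ) = x + e i + S * (g i - c)) :
    GBSBouquet k A B →* GBSBouquet k A' B' :=
  lift (stable 0 ^ c * base ^ R ^ x * stable 0 ^ (-c))
    (fun i => stable 0 ^ g i * stable (σ i) * stable 0 ^ (-g i)) (twist_relations hAB hAB' hσ he)

section Twist

variable (hAB : IsAscendingBouquet R S e A B) (hAB' : IsAscendingBouquet R S e' A' B')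
  {c : ℤ} {x : ℕ} {g : Fin k → ℤ} {σ : Equiv.Perm (Fin k)} (hσ : σ 0 = 0)
  (he : ∀ i, i ≠ 0 → (e' (σ i) : ℤ) = x + e i + S * (g i - c))

@[simp]
theorem twist_base :
    twist hAB hAB' c x g σ hσ he base = stable 0 ^ c * base ^ R ^ x * stable 0 ^ (-c) :=
  lift_base

@[simp]
theorem twist_stable (i : Fin k) :
    twist hAB hAB' c x g σ hσ he (stable i) = stable 0 ^ g i * stable (σ i) * stable 0 ^ (-g i) :=
  lift_stable i

theorem twist_stable_zero : twist hAB hAB' c x g σ hσ he (stable 0) = stable 0 := by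
  rw [twist_stable, hσ]
  group

theorem twist_comp_twist {c' : ℤ} {x' : ℕ} {g' : Fin k → ℤ} {σ' : Equiv.Perm (Fin k)}
    (hσ' : σ' 0 = 0) (he' : ∀ i, i ≠ 0 → (e (σ' i) : ℤ) = x' + e' i + S * (g' i - c'))
    (hσσ' : ∀ i, σ' (σ i) = i) (hgg' : ∀ i, g' (σ i) = -g i) (hcx : (x + x' : ℤ) = S * (c + c')) :
    (twist hAB' hAB c' x' g' σ' hσ' he').comp (twist hAB hAB' c x g σ hσ he) = MonoidHom.id _ := by
  refine hom_ext ?_ fun i => ?_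
  · have h := conj_zpow_pow_eq hAB.inv_stable_zero_mul_base_mul_stable_zero (c := c + c') (g := 0)
      (E := 0) (F := x' + x) (by push_cast; linear_combination -hcx)
    simp only [zpow_zero, pow_zero, zpow_one, one_mul, mul_one, neg_zero] at h
    simp only [MonoidHom.comp_apply, twist_base, map_mul, map_zpow, twist_stable_zero,
      MonoidHom.id_apply]
    rw [zpow_neg, conj_zpow, ← zpow_mul, ← pow_add, ← zpow_neg]
    refine Eq.trans ?_ h
    group
  · simp only [MonoidHom.comp_apply, twist_stable, map_mul, map_zpow, hσ', hσσ', hgg',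
      MonoidHom.id_apply]
    group

end Twist

theorem nonempty_mulEquiv_of_eq_add_mul (hAB : IsAscendingBouquet R S e A B)
    (hAB' : IsAscendingBouquet R S e' A' B') {σ : Equiv.Perm (Fin k)} (hσ : σ 0 = 0)
    {C₀ x : ℕ} {c : ℤ} (hx : (C₀ + x : ℤ) = S * c) {g : Fin k → ℤ}
    (hg : ∀ i, i ≠ 0 → (e' (σ i) : ℤ) = C₀ + e i + S * g i) :
    Nonempty (GBSBouquet k A B ≃* GBSBouquet k A' B') := by
  have hσ' : σ.symm 0 = 0 := σ.symm_apply_eq.2 hσ.symm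
  have he : ∀ i, i ≠ 0 → (e' (σ i) : ℤ) = C₀ + e i + S * (g i - 0) := by
    simpa only [sub_zero] using hg
  have he' : ∀ j, j ≠ 0 → (e (σ.symm j) : ℤ) = x + e' j + S * (-g (σ.symm j) - c) := by
    intro j hj
    have h := hg (σ.symm j) (hσ' ▸ σ.symm.injective.ne hj)
    rw [Equiv.apply_symm_apply] at h
    linear_combination -h - hx
  exact ⟨MonoidHom.toMulEquiv (hAB.twist hAB' 0 C₀ g σ hσ he)
    (hAB'.twist hAB c x (fun j => -g (σ.symm j)) σ.symm hσ' he')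
    (hAB.twist_comp_twist hAB' hσ he hσ' he' (by simp) (by simp) (by rw [hx, zero_add]))
    (hAB'.twist_comp_twist hAB hσ' he' hσ he (by simp) (by simp) (by rw [add_comm, hx, add_zero]))⟩

theorem nonempty_mulEquiv_of_modEq (hAB : IsAscendingBouquet R S e A B)
    (hAB' : IsAscendingBouquet R S e' A' B') (hS : 0 < S) {σ : Equiv.Perm (Fin k)} (hσ : σ 0 = 0)
    {C : ℤ} (h : ∀ i, i ≠ 0 → (e' (σ i) : ℤ) ≡ e i + C [ZMOD S]) :
    Nonempty (GBSBouquet k A B ≃* GBSBouquet k A' B') := by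
  obtain ⟨C₀, hC₀⟩ : ∃ C₀ : ℕ, (C₀ : ℤ) ≡ C [ZMOD S] :=
    ⟨(C % S).toNat, by
      rw [Int.toNat_of_nonneg (Int.emod_nonneg _ (by omega))]; exact Int.mod_modEq C S⟩
  have hslide : ∀ i, i ≠ 0 → ∃ g : ℤ, (e' (σ i) : ℤ) = C₀ + e i + S * g := fun i hi => by
    obtain ⟨g, hg⟩ := ((hC₀.add_left _).trans (h i hi).symm).dvd
    exact ⟨g, by linear_combination hg⟩
  choose! g hg using hslide
  exact hAB.nonempty_mulEquiv_of_eq_add_mul hAB' hσ (x := (S - 1) * C₀) (c := C₀)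
    (by push_cast [Nat.cast_sub hS]; ring) hg

end IsAscendingBouquet

theorem GBS_bouquet_iso_of_cyclic_permutation_general
    (r l₁ l₂ m₁ m₂ k S : ℕ) [NeZero k]
    (hl₁ : 1 ≤ l₁) (hm₁ : 1 ≤ m₁)
    (hS₁ : l₁ * m₁ = S) (hS₂ : l₂ * m₂ = S)
    (A₁ B₁ A₂ B₂ : Fin k → ℤ) (p q : Fin k → ℕ)
    (hA₁0 : A₁ 0 = 1) (hB₁0 : B₁ 0 = (r : ℤ) ^ (l₁ * m₁))
    (hA₁ : ∀ i : Fin k, i ≠ 0 →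
      A₁ i = (r : ℤ) ^ (l₁ * p i) ∧ B₁ i = (r : ℤ) ^ (l₁ * p i))
    (hA₂0 : A₂ 0 = 1) (hB₂0 : B₂ 0 = (r : ℤ) ^ (l₂ * m₂))
    (hA₂ : ∀ i : Fin k, i ≠ 0 →
      A₂ i = (r : ℤ) ^ (l₂ * q i) ∧ B₂ i = (r : ℤ) ^ (l₂ * q i))
    (hperm : ∃ (C : ℤ) (σ : Equiv.Perm (Fin k)), σ 0 = 0 ∧
      ∀ i : Fin k, i ≠ 0 →
        ((l₂ * q (σ i) : ℤ) ≡ (l₁ * p i : ℤ) + C [ZMOD (S : ℤ)])) :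
    Nonempty (GBSBouquet k A₁ B₁ ≃* GBSBouquet k A₂ B₂) := by
  obtain ⟨C, σ, hσ, hmod⟩ := hperm
  have h₁ : IsAscendingBouquet (r : ℤ) S (fun i => l₁ * p i) A₁ B₁ :=
    ⟨hA₁0, hS₁ ▸ hB₁0, fun i hi => (hA₁ i hi).1, fun i hi => (hA₁ i hi).2⟩
  have h₂ : IsAscendingBouquet (r : ℤ) S (fun i => l₂ * q i) A₂ B₂ :=
    ⟨hA₂0, hS₂ ▸ hB₂0, fun i hi => (hA₂ i hi).1, fun i hi => (hA₂ i hi).2⟩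
  exact h₁.nonempty_mulEquiv_of_modEq h₂ (hS₁ ▸ Nat.mul_pos hl₁ hm₁) hσ (C := C) fun i hi => by
    push_cast
    exact hmod i hi

theorem GBS_bouquet_iso_of_cyclic_permutation
    (r l₁ l₂ m₁ m₂ k S : ℕ) [NeZero k]
    (hr : 2 ≤ r) (hl₁ : 1 ≤ l₁) (hl₂ : 1 ≤ l₂) (hm₁ : 1 ≤ m₁) (hm₂ : 1 ≤ m₂)
    (hk : 2 ≤ k) (hS₁ : l₁ * m₁ = S) (hS₂ : l₂ * m₂ = S)
    (A₁ B₁ A₂ B₂ : Fin k → ℤ) (p q : Fin k → ℕ)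
    (hp : ∀ i : Fin k, i ≠ 0 → p i ≤ m₁ - 1)
    (hq : ∀ i : Fin k, i ≠ 0 → q i ≤ m₂ - 1)
    (hA₁0 : A₁ 0 = 1) (hB₁0 : B₁ 0 = (r : ℤ) ^ (l₁ * m₁))
    (hA₁ : ∀ i : Fin k, i ≠ 0 →
      A₁ i = (r : ℤ) ^ (l₁ * p i) ∧ B₁ i = (r : ℤ) ^ (l₁ * p i))
    (hA₂0 : A₂ 0 = 1) (hB₂0 : B₂ 0 = (r : ℤ) ^ (l₂ * m₂))
    (hA₂ : ∀ i : Fin k, i ≠ 0 →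
      A₂ i = (r : ℤ) ^ (l₂ * q i) ∧ B₂ i = (r : ℤ) ^ (l₂ * q i))
    (hperm : ∃ (C : ℤ) (σ : Equiv.Perm (Fin k)), σ 0 = 0 ∧
      ∀ i : Fin k, i ≠ 0 →
        ((l₂ * q (σ i) : ℤ) ≡ (l₁ * p i : ℤ) + C [ZMOD (S : ℤ)])) :
    Nonempty (GBSBouquet k A₁ B₁ ≃* GBSBouquet k A₂ B₂) :=
  GBS_bouquet_iso_of_cyclic_permutation_general r l₁ l₂ m₁ m₂ k S hl₁ hm₁ hS₁ hS₂ A₁ B₁ A₂ B₂ p q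
    hA₁0 hB₁0 hA₁ hA₂0 hB₂0 hA₂ hperm
end
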